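/- arXiv:1809.02241 — 2 statements merged into one kernel-verified Lean document; each statement's English description precedes it below -/
import Mathlib

section
/- Under the same hypotheses (f absolutely continuous with ‖ḟ‖ < ∞, g a step function adapted to the uniform partition of [a,b] into d pieces, Δ = f − g), for every ε̃ > 0 one has the reverse comparison ‖Δ‖_d² ≤ (1 + ε̃) ‖Δ‖² + (1 + 1/ε̃) (b−a)² ‖ḟ‖² / d². -/
/-!
On a cell `(x₀, y]` of the partition, `g` is a constant `c`, and for `x` in the cell
`f y - c = (f x - c) + ∫ₓʸ f'`. Young's inequality `(u + v)² ≤ (1 + ε) u² + (1 + 1/ε) v²` and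
Cauchy–Schwarz `(∫ₓʸ f')² ≤ h ∫_{x₀}^y f'²`, with `h = (b - a)/d` the cell length, bound
`(f y - c)²` by `(1 + ε) (f x - c)² + (1 + 1/ε) h ∫_{x₀}^y f'²`; averaging over `x` in the cell
and summing over the cells gives the claim.
-/

open MeasureTheory Set intervalIntegral
open scoped Interval

theorem add_sq_le_one_add_mul_sq_add (u v : ℝ) {ε : ℝ} (hε : 0 < ε) :
    (u + v) ^ 2 ≤ (1 + ε) * u ^ 2 + (1 + 1 / ε) * v ^ 2 := by
  have h : (1 + ε) * u ^ 2 + (1 + 1 / ε) * v ^ 2 - (u + v) ^ 2 = (ε * u - v) ^ 2 / ε := by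
    field_simp
    ring
  linarith [div_nonneg (sq_nonneg (ε * u - v)) hε.le]

theorem sq_intervalIntegral_le_mul_integral_sq {F : ℝ → ℝ} {x y : ℝ} (hxy : x ≤ y)
    (hF : IntervalIntegrable F volume x y) (hF2 : IntervalIntegrable (fun t => F t ^ 2) volume x y) :
    (∫ t in x..y, F t) ^ 2 ≤ (y - x) * ∫ t in x..y, F t ^ 2 := by
  set B := ∫ t in x..y, F t
  have h0 : 0 ≤ ∫ t in x..y, ((y - x) * F t - B) ^ 2 :=
    integral_nonneg hxy fun t _ => sq_nonneg _
  have hexpand : ∫ t in x..y, ((y - x) * F t - B) ^ 2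
      = (y - x) * ((y - x) * (∫ t in x..y, F t ^ 2) - B ^ 2) := by
    have h : ∀ t, ((y - x) * F t - B) ^ 2 = (y - x) ^ 2 * F t ^ 2 - 2 * (y - x) * B * F t + B ^ 2 :=
      fun t => by ring
    simp_rw [h]
    rw [integral_add ((hF2.const_mul _).sub (hF.const_mul _)) intervalIntegrable_const,
      integral_sub (hF2.const_mul _) (hF.const_mul _), intervalIntegral.integral_const_mul,
      intervalIntegral.integral_const_mul, intervalIntegral.integral_const, smul_eq_mul]
    ring
  rcases hxy.eq_or_lt with rfl | hlt
  · simp [B]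
  nlinarith [sub_pos.2 hlt]

theorem intervalIntegrable_of_hasDerivAt_of_sq {F F' : ℝ → ℝ} {a b : ℝ}
    (hF : ∀ t ∈ Ι a b, HasDerivAt F (F' t) t)
    (hF'2 : IntervalIntegrable (fun t => F' t ^ 2) volume a b) :
    IntervalIntegrable F' volume a b := by
  have hmeas : AEStronglyMeasurable F' (volume.restrict (Ι a b)) :=
    (measurable_deriv F).aestronglyMeasurable.congr
      ((ae_restrict_iff' measurableSet_uIoc).2 (ae_of_all _ fun t ht => (hF t ht).deriv))
  have : IsFiniteMeasure (volume.restrict (Ι a b)) := isFiniteMeasure_restrict.2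
    ((measure_mono uIoc_subset_uIcc).trans_lt isCompact_uIcc.measure_lt_top).ne
  rw [intervalIntegrable_iff]
  exact ((memLp_two_iff_integrable_sq hmeas).2 hF'2.def').integrable one_le_two

theorem sq_le_of_hasDerivAt {F F' : ℝ → ℝ} {x₀ y ε : ℝ} (hε : 0 < ε)
    (hF : ∀ t ∈ Icc x₀ y, HasDerivAt F (F' t) t)
    (hF'2 : IntervalIntegrable (fun t => F' t ^ 2) volume x₀ y) {x : ℝ} (hx : x ∈ Icc x₀ y) :
    F y ^ 2 ≤ (1 + ε) * F x ^ 2 + (1 + 1 / ε) * ((y - x₀) * ∫ t in x₀..y, F' t ^ 2) := by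
  have hsub : uIcc x y ⊆ Icc x₀ y := by
    rw [uIcc_of_le hx.2]
    exact Icc_subset_Icc_left hx.1
  have hF'2x : IntervalIntegrable (fun t => F' t ^ 2) volume x y :=
    hF'2.mono_set (by rwa [uIcc_of_le (hx.1.trans hx.2)])
  have hF'x : IntervalIntegrable F' volume x y :=
    intervalIntegrable_of_hasDerivAt_of_sq (fun t ht => hF t (hsub (uIoc_subset_uIcc ht))) hF'2x
  have hftc : F y = F x + ∫ t in x..y, F' t := by
    rw [integral_eq_sub_of_hasDerivAt (fun t ht => hF t (hsub ht)) hF'x]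
    ring
  have hcs : (∫ t in x..y, F' t) ^ 2 ≤ (y - x₀) * ∫ t in x₀..y, F' t ^ 2 :=
    calc (∫ t in x..y, F' t) ^ 2 ≤ (y - x) * ∫ t in x..y, F' t ^ 2 :=
          sq_intervalIntegral_le_mul_integral_sq hx.2 hF'x hF'2x
      _ ≤ (y - x₀) * ∫ t in x₀..y, F' t ^ 2 := by
          refine mul_le_mul (by linarith [hx.1]) ?_ (integral_nonneg hx.2 fun _ _ => sq_nonneg _)
            (by linarith [hx.1, hx.2])
          exact integral_mono_interval hx.1 hx.2 le_rfl (ae_of_all _ fun t => sq_nonneg _) hF'2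
  rw [hftc]
  calc (F x + ∫ t in x..y, F' t) ^ 2 ≤ (1 + ε) * F x ^ 2 + (1 + 1 / ε) * (∫ t in x..y, F' t) ^ 2 :=
        add_sq_le_one_add_mul_sq_add _ _ hε
    _ ≤ _ := by gcongr

theorem mul_sq_le_of_hasDerivAt {F F' : ℝ → ℝ} {x₀ y ε : ℝ} (hxy : x₀ ≤ y) (hε : 0 < ε)
    (hF : ∀ t ∈ Icc x₀ y, HasDerivAt F (F' t) t)
    (hF'2 : IntervalIntegrable (fun t => F' t ^ 2) volume x₀ y) :
    (y - x₀) * F y ^ 2 ≤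
      (1 + ε) * (∫ t in x₀..y, F t ^ 2) + (1 + 1 / ε) * (y - x₀) ^ 2 * ∫ t in x₀..y, F' t ^ 2 := by
  have hF2 : IntervalIntegrable (fun t => F t ^ 2) volume x₀ y := by
    refine (ContinuousOn.pow (fun t ht => ?_) 2).intervalIntegrable
    rw [uIcc_of_le hxy] at ht
    exact (hF t ht).continuousAt.continuousWithinAt
  have h := integral_mono_on hxy intervalIntegrable_const
    ((hF2.const_mul (1 + ε)).add intervalIntegrable_const) fun x hx => sq_le_of_hasDerivAt hε hF hF'2 hx
  rw [integral_add (hF2.const_mul _) intervalIntegrable_const, intervalIntegral.integral_const_mul,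
    intervalIntegral.integral_const, intervalIntegral.integral_const, smul_eq_mul, smul_eq_mul] at h
  linear_combination h

theorem mul_sq_sub_le_of_eq_on_Ioc {f f' g : ℝ → ℝ} {x₀ y ε c : ℝ} (hxy : x₀ < y) (hε : 0 < ε)
    (hf : ∀ t ∈ Icc x₀ y, HasDerivAt f (f' t) t)
    (hf'2 : IntervalIntegrable (fun t => f' t ^ 2) volume x₀ y)
    (hg : ∀ t ∈ Ioc x₀ y, g t = c) :
    (y - x₀) * (f y - g y) ^ 2 ≤
      (1 + ε) * (∫ t in x₀..y, (f t - g t) ^ 2)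
        + (1 + 1 / ε) * (y - x₀) ^ 2 * ∫ t in x₀..y, f' t ^ 2 := by
  have hfg : ∫ t in x₀..y, (f t - g t) ^ 2 = ∫ t in x₀..y, (f t - c) ^ 2 :=
    integral_congr_ae (ae_of_all _ fun t ht => by rw [uIoc_of_le hxy.le] at ht; rw [hg t ht])
  rw [hfg, hg y ⟨hxy, le_rfl⟩]
  exact mul_sq_le_of_hasDerivAt hxy.le hε (fun t ht => (hf t ht).sub_const c) hf'2

theorem intervalIntegrable_sq_sub_of_eq_on_Ioc {f g : ℝ → ℝ} {x₀ y c : ℝ} (hxy : x₀ ≤ y)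
    (hf : ContinuousOn f (Icc x₀ y)) (hg : ∀ t ∈ Ioc x₀ y, g t = c) :
    IntervalIntegrable (fun t => (f t - g t) ^ 2) volume x₀ y := by
  have hfc : ContinuousOn (fun t => (f t - c) ^ 2) (Icc x₀ y) := (hf.sub continuousOn_const).pow 2
  refine (hfc.intervalIntegrable_of_Icc hxy).congr_ae ?_
  rw [uIoc_of_le hxy]
  exact (ae_restrict_iff' measurableSet_Ioc).2 (ae_of_all _ fun t ht => by simp only [hg t ht])

noncomputable def uniformNode (a b : ℝ) (d k : ℕ) : ℝ := a + k * (b - a) / d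

theorem uniformNode_succ_sub (a b : ℝ) (d k : ℕ) :
    uniformNode a b d (k + 1) - uniformNode a b d k = (b - a) / d := by
  simp only [uniformNode]
  push_cast
  ring

theorem uniformNode_zero (a b : ℝ) (d : ℕ) : uniformNode a b d 0 = a := by
  simp [uniformNode]

theorem uniformNode_self (a b : ℝ) {d : ℕ} (hd : d ≠ 0) : uniformNode a b d d = b := by
  simp only [uniformNode]
  field_simp
  ring

theorem uniformNode_lt_succ {a b : ℝ} (hab : a < b) {d : ℕ} (hd : d ≠ 0) (k : ℕ) :
    uniformNode a b d k < uniformNode a b d (k + 1) := by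
  have : 0 < (b - a) / d := div_pos (sub_pos.2 hab) (by positivity)
  linarith [uniformNode_succ_sub a b d k]

theorem sum_integral_uniformNode {F : ℝ → ℝ} {a b : ℝ} {d : ℕ} (hd : d ≠ 0)
    (hF : ∀ k < d, IntervalIntegrable F volume (uniformNode a b d k) (uniformNode a b d (k + 1))) :
    ∑ k ∈ Finset.range d, ∫ x in uniformNode a b d k..uniformNode a b d (k + 1), F x
      = ∫ x in a..b, F x := by
  rw [sum_integral_adjacent_intervals hF, uniformNode_zero, uniformNode_self a b hd]

theorem Icc_uniformNode_subset {a b : ℝ} (hab : a ≤ b) {d k : ℕ} (hk : k < d) :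
    Icc (uniformNode a b d k) (uniformNode a b d (k + 1)) ⊆ Icc a b := by
  have hd : (0 : ℝ) < d := by exact_mod_cast (Nat.zero_le k).trans_lt hk
  have hkd : ((k + 1 : ℕ) : ℝ) ≤ d := by exact_mod_cast hk
  refine Icc_subset_Icc ?_ ?_ <;> simp only [uniformNode]
  · have : 0 ≤ (k : ℝ) * (b - a) / d := by have := sub_nonneg.2 hab; positivity
    linarith
  · have : ((k + 1 : ℕ) : ℝ) * (b - a) / d ≤ b - a := by
      rw [div_le_iff₀ hd]
      nlinarith
    linarith

theorem discrete_vs_continuous_norm_general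
    (a b : ℝ) (hab : a < b) (d : ℕ) (hd : 1 ≤ d)
    (f f' g : ℝ → ℝ)
    (hf : ∀ x ∈ Set.Icc a b, HasDerivAt f (f' x) x)
    (hf'2 : IntervalIntegrable (fun x => (f' x) ^ 2) volume a b)
    (c : ℕ → ℝ)
    (hg : ∀ j ∈ Finset.Icc 1 d,
      ∀ t ∈ Set.Ioc (a + ((j : ℝ) - 1) * (b - a) / d) (a + (j : ℝ) * (b - a) / d), g t = c j)
    (ε : ℝ) (hε : 0 < ε) :
    ((b - a) / d) *
        ∑ l ∈ Finset.Icc 1 d, (f (a + (l : ℝ) * (b - a) / d) - g (a + (l : ℝ) * (b - a) / d)) ^ 2 ≤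
      (1 + ε) * (∫ x in a..b, (f x - g x) ^ 2)
      + (1 + 1 / ε) * (b - a) ^ 2 * (∫ x in a..b, (f' x) ^ 2) / d ^ 2 := by
  set X := uniformNode a b d
  have hd0 : d ≠ 0 := Nat.one_le_iff_ne_zero.1 hd
  have hstep (k : ℕ) : X (k + 1) - X k = (b - a) / d := uniformNode_succ_sub a b d k
  have hcell (k : ℕ) (hk : k < d) : Icc (X k) (X (k + 1)) ⊆ Icc a b :=
    Icc_uniformNode_subset hab.le hk
  have hlt (k : ℕ) : X k < X (k + 1) := uniformNode_lt_succ hab hd0 k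
  have hgk (k : ℕ) (hk : k < d) (t : ℝ) (ht : t ∈ Ioc (X k) (X (k + 1))) : g t = c (k + 1) :=
    hg (k + 1) (Finset.mem_Icc.2 ⟨Nat.le_add_left 1 k, hk⟩) t (by simpa [X, uniformNode] using ht)
  have hf'2k (k : ℕ) (hk : k < d) :
      IntervalIntegrable (fun x => f' x ^ 2) volume (X k) (X (k + 1)) :=
    hf'2.mono_set (by simpa [uIcc_of_le hab.le, uIcc_of_le (hlt k).le] using hcell k hk)
  have hΔk (k : ℕ) (hk : k < d) :
      IntervalIntegrable (fun x => (f x - g x) ^ 2) volume (X k) (X (k + 1)) :=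
    intervalIntegrable_sq_sub_of_eq_on_Ioc (hlt k).le
      (fun t ht => (hf t (hcell k hk ht)).continuousAt.continuousWithinAt) (hgk k hk)
  calc ((b - a) / d) * ∑ l ∈ Finset.Icc 1 d, (f (X l) - g (X l)) ^ 2
      = ∑ k ∈ Finset.range d, (X (k + 1) - X k) * (f (X (k + 1)) - g (X (k + 1))) ^ 2 := by
        rw [← Finset.Ico_add_one_right_eq_Icc, Finset.sum_Ico_eq_sum_range, Finset.mul_sum]
        simp only [hstep, add_comm 1, Nat.add_sub_cancel]
    _ ≤ ∑ k ∈ Finset.range d, ((1 + ε) * (∫ x in X k..X (k + 1), (f x - g x) ^ 2)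
          + (1 + 1 / ε) * ((b - a) / d) ^ 2 * ∫ x in X k..X (k + 1), f' x ^ 2) := by
        refine Finset.sum_le_sum fun k hk => ?_
        rw [← hstep k]
        have hk := Finset.mem_range.1 hk
        exact mul_sq_sub_le_of_eq_on_Ioc (hlt k) hε (fun t ht => hf t (hcell k hk ht)) (hf'2k k hk)
          (hgk k hk)
    _ = (1 + ε) * (∫ x in a..b, (f x - g x) ^ 2)
          + (1 + 1 / ε) * (b - a) ^ 2 * (∫ x in a..b, (f' x) ^ 2) / d ^ 2 := by
        rw [Finset.sum_add_distrib, ← Finset.mul_sum, ← Finset.mul_sum, sum_integral_uniformNode hd0 hΔk,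
          sum_integral_uniformNode hd0 hf'2k]
        ring

theorem discrete_vs_continuous_norm
    (a b : ℝ) (hab : a < b) (d : ℕ) (hd : 1 ≤ d)
    (f f' g : ℝ → ℝ)
    (hf : ∀ x ∈ Set.Icc a b, HasDerivAt f (f' x) x)
    (hf'2 : IntervalIntegrable (fun x => (f' x) ^ 2) volume a b)
    (p : ℕ) (c : ℕ → ℝ)
    (hg : ∀ j ∈ Finset.Icc 1 d,
      ∀ t ∈ Set.Ioc (a + ((j : ℝ) - 1) * (b - a) / d) (a + (j : ℝ) * (b - a) / d), g t = c j)
    (ε : ℝ) (hε : 0 < ε) :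
    ((b - a) / d) *
        ∑ l ∈ Finset.Icc 1 d, (f (a + (l : ℝ) * (b - a) / d) - g (a + (l : ℝ) * (b - a) / d)) ^ 2 ≤
      (1 + ε) * (∫ x in a..b, (f x - g x) ^ 2)
      + (1 + 1 / ε) * (b - a) ^ 2 * (∫ x in a..b, (f' x) ^ 2) / d ^ 2 :=
  discrete_vs_continuous_norm_general a b hab d hd f f' g hf hf'2 c hg ε hε
end

section
/- Consider the autoregressive process y_k = S(x_k) y_{k−1} + ξ_k for 1 ≤ k ≤ n, where x_k = a + k(b−a)/n, y_0 is a fixed constant, (ξ_k) are i.i.d. with mean 0, variance 1, and all moments satisfying E|ξ_1|^{2t} ≤ ς^t (2t−1)!! for some ς ≥ 1, and |S(x)| ≤ 1 − ε for all x ∈ [a,b] with 0 < ε < 1. Then for every t ∈ ℕ*, sup_{n≥1} sup_{0≤k≤n} sup_S E y_k^{2t} < ∞, where the supremum over S is over all continuously differentiable S with |S|_∞ ≤ 1 − ε. -/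
/-!
In `L^{2t}`, Minkowski's inequality turns the recursion into
`‖y_k‖ ≤ |S(x_k)| ‖y_{k-1}‖ + ‖ξ_1‖ ≤ (1 - ε) ‖y_{k-1}‖ + ‖ξ_1‖`, and the contraction keeps
`‖y_k‖ ≤ |y₀| + ‖ξ_1‖ / ε` for all `n`, `k` and `S`. The norm used is the real-valued `lpNorm`,
which is `0` outside `L^{2t}` just as the Bochner integral of a non-integrable function is;
independence of `y_{k-1}` and `ξ_k` keeps the triangle inequality valid in that case too.
-/

open MeasureTheory ProbabilityTheory
open scoped ENNReal

namespace ProbabilityTheory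

variable {Ω : Type*} [MeasurableSpace Ω] {μ : Measure Ω} [IsProbabilityMeasure μ]
  {p : ℝ≥0∞} {X Y : Ω → ℝ}

theorem IndepFun.memLp_right_of_memLp_add (hXY : X ⟂ᵢ[μ] Y) (hX : Measurable X)
    (hY : Measurable Y) (hp : p ≠ ∞) (hsum : MemLp (X + Y) p μ) : MemLp Y p μ := by
  rcases eq_or_ne p 0 with rfl | hp0
  · exact memLp_zero_iff_aestronglyMeasurable.mpr hY.aestronglyMeasurable
  have : IsProbabilityMeasure (μ.map X) := Measure.isProbabilityMeasure_map hX.aemeasurable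
  have : IsProbabilityMeasure (μ.map Y) := Measure.isProbabilityMeasure_map hY.aemeasurable
  set φ : ℝ × ℝ → ℝ≥0∞ := fun q ↦ ‖q.1 + q.2‖ₑ ^ p.toReal
  have hφ : Measurable φ := by fun_prop
  have hlaw : μ.map (fun ω ↦ (X ω, Y ω)) = (μ.map X).prod (μ.map Y) :=
    (indepFun_iff_map_prod_eq_prod_map_map hX.aemeasurable hY.aemeasurable).mp hXY
  -- by Fubini, the shift `x + Y` is in `L^p` for almost every value `x` of `X`
  have hfin : ∫⁻ x, ∫⁻ y, φ (x, y) ∂μ.map Y ∂μ.map X ≠ ∞ := by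
    rw [← lintegral_prod _ hφ.aemeasurable, ← hlaw, lintegral_map hφ (hX.prodMk hY)]
    exact (lintegral_rpow_enorm_lt_top_of_eLpNorm_lt_top hp0 hp hsum.eLpNorm_lt_top).ne
  obtain ⟨x, hx⟩ := (ae_lt_top (hφ.lintegral_prod_right') hfin).exists
  have hshift : MemLp (fun y ↦ x + y) p (μ.map Y) :=
    ⟨by fun_prop, (eLpNorm_lt_top_iff_lintegral_rpow_enorm_lt_top hp0 hp).mpr hx⟩
  have hid : MemLp id p (μ.map Y) := by
    convert hshift.sub (memLp_const x) using 1
    ext y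
    simp
  exact (memLp_map_measure_iff aestronglyMeasurable_id hY.aemeasurable).mp hid

theorem IndepFun.lpNorm_add_le (hXY : X ⟂ᵢ[μ] Y) (hX : Measurable X) (hY : Measurable Y)
    (hp : 1 ≤ p) (hp_top : p ≠ ∞) : lpNorm (X + Y) p μ ≤ lpNorm X p μ + lpNorm Y p μ := by
  by_cases hXp : MemLp X p μ
  · exact MeasureTheory.lpNorm_add_le hXp hp
  by_cases hYp : MemLp Y p μ
  · exact lpNorm_add_le' hYp hp
  -- this case needs independence: `X + (-X) = 0`
  have hsum : ¬MemLp (X + Y) p μ := fun h ↦ hYp (hXY.memLp_right_of_memLp_add hX hY hp_top h)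
  rw [lpNorm_of_not_memLp hsum]
  exact add_nonneg lpNorm_nonneg lpNorm_nonneg

end ProbabilityTheory

theorem MeasureTheory.integral_norm_pow_eq_lpNorm_pow {α E : Type*} [MeasurableSpace α]
    {μ : Measure α} [NormedAddCommGroup E] {f : α → E} {n : ℕ} (hn : n ≠ 0)
    (hf : AEStronglyMeasurable f μ) : ∫ x, ‖f x‖ ^ n ∂μ = lpNorm f n μ ^ n := by
  have hn' : (n : ℝ) ≠ 0 := Nat.cast_ne_zero.mpr hn
  rw [lpNorm_eq_integral_norm_rpow_toReal (by exact_mod_cast hn) (ENNReal.natCast_ne_top n) hf,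
    ENNReal.toReal_natCast, ← Real.rpow_natCast, ← Real.rpow_mul (by positivity),
    inv_mul_cancel₀ hn', Real.rpow_one]
  simp_rw [Real.rpow_natCast]

theorem le_add_div_of_le_mul_add {n : ℕ} {u r : ℕ → ℝ} {ε M : ℝ} (hε : 0 < ε) (hu₀ : 0 ≤ u 0)
    (hM : 0 ≤ M) (hr₀ : ∀ j, 0 ≤ r j) (hr : ∀ j, 1 ≤ j → j ≤ n → r j ≤ 1 - ε)
    (hstep : ∀ j < n, u (j + 1) ≤ r (j + 1) * u j + M) : ∀ j ≤ n, u j ≤ u 0 + M / ε := by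
  have hB : 0 ≤ u 0 + M / ε := by positivity
  intro j hj
  induction j with
  | zero => exact le_add_of_nonneg_right (by positivity)
  | succ j ih =>
    calc u (j + 1) ≤ r (j + 1) * u j + M := hstep j hj
      _ ≤ (1 - ε) * (u 0 + M / ε) + M := by
        grw [ih (by omega), hr _ (by omega) hj]
        exact hr₀ _
      _ = u 0 + M / ε - ε * u 0 := by field_simp; ring
      _ ≤ u 0 + M / ε := by nlinarith

theorem add_natCast_mul_sub_div_mem_Icc {a b : ℝ} (hab : a ≤ b) {k n : ℕ} (hk : k ≤ n) :
    a + k * (b - a) / n ∈ Set.Icc a b := by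
  have h01 : (k : ℝ) / n ∈ Set.Icc (0 : ℝ) 1 :=
    ⟨by positivity, div_le_one_of_le₀ (by exact_mod_cast hk) n.cast_nonneg⟩
  rw [mul_div_right_comm]
  constructor <;> nlinarith [h01.1, h01.2]

section Autoregression

variable {Ω : Type*} [MeasurableSpace Ω] {ξ y : ℕ → Ω → ℝ} {c : ℕ → ℝ} {n : ℕ} {y₀ : ℝ}

theorem measurable_natural_of_autoregression (hξ : ∀ k, Measurable (ξ k))
    (hy₀ : ∀ ω, y 0 ω = y₀) (hstep : ∀ j < n, ∀ ω, y (j + 1) ω = c (j + 1) * y j ω + ξ (j + 1) ω) :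
    ∀ k ≤ n, Measurable[Filtration.natural ξ (fun k ↦ (hξ k).stronglyMeasurable) k] (y k) := by
  intro k hk
  induction k with
  | zero =>
    rw [show y 0 = fun _ ↦ y₀ from funext hy₀]
    exact measurable_const
  | succ j ih =>
    rw [show y (j + 1) = fun ω ↦ c (j + 1) * y j ω + ξ (j + 1) ω from funext (hstep j hk)]
    refine Measurable.add (Measurable.const_mul ?_ _) ?_
    · exact (ih (by omega)).mono (Filtration.mono _ (by omega)) le_rfl
    · exact (Filtration.stronglyAdapted_natural (β := fun _ ↦ ℝ) _ (j + 1)).measurable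

theorem measurable_of_autoregression (hξ : ∀ k, Measurable (ξ k)) (hy₀ : ∀ ω, y 0 ω = y₀)
    (hstep : ∀ j < n, ∀ ω, y (j + 1) ω = c (j + 1) * y j ω + ξ (j + 1) ω) (k : ℕ) (hk : k ≤ n) :
    Measurable (y k) :=
  (measurable_natural_of_autoregression hξ hy₀ hstep k hk).mono (Filtration.le _ _) le_rfl

theorem lpNorm_autoregression_le {μ : Measure Ω} [IsProbabilityMeasure μ] {p : ℝ≥0∞}
    {ε M : ℝ} (hξ : ∀ k, Measurable (ξ k)) (hindep : iIndepFun ξ μ) (hp : 1 ≤ p)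
    (hp_top : p ≠ ∞) (hε : 0 < ε) (hc : ∀ j, 1 ≤ j → j ≤ n → |c j| ≤ 1 - ε)
    (hM : ∀ k, lpNorm (ξ k) p μ ≤ M) (hy₀ : ∀ ω, y 0 ω = y₀)
    (hstep : ∀ j < n, ∀ ω, y (j + 1) ω = c (j + 1) * y j ω + ξ (j + 1) ω) :
    ∀ k ≤ n, lpNorm (y k) p μ ≤ |y₀| + M / ε := by
  have hy := measurable_natural_of_autoregression hξ hy₀ hstep
  have hy₀_norm : lpNorm (y 0) p μ = |y₀| := by
    simp [show y 0 = fun _ ↦ y₀ from funext hy₀, (zero_lt_one.trans_le hp).ne', hp_top]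
  rw [← hy₀_norm]
  refine le_add_div_of_le_mul_add hε lpNorm_nonneg (lpNorm_nonneg.trans (hM 0))
    (fun j ↦ abs_nonneg (c j)) hc fun j hj ↦ ?_
  have hindep_j : (c (j + 1) • y j) ⟂ᵢ[μ] ξ (j + 1) := by
    refine (?_ : y j ⟂ᵢ[μ] ξ (j + 1)).comp (measurable_const_mul (c (j + 1))) measurable_id
    exact (IndepFun_iff_Indep _ _ _).mpr <| indep_of_indep_of_le_left
      (hindep.indep_comap_natural_of_lt _ (lt_add_one j)).symm (hy j hj.le).comap_le
  calc lpNorm (y (j + 1)) p μ = lpNorm (c (j + 1) • y j + ξ (j + 1)) p μ := by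
        rw [show y (j + 1) = c (j + 1) • y j + ξ (j + 1) from funext (hstep j hj)]
    _ ≤ lpNorm (c (j + 1) • y j) p μ + lpNorm (ξ (j + 1)) p μ :=
        hindep_j.lpNorm_add_le
          ((measurable_of_autoregression hξ hy₀ hstep j hj.le).const_smul _) (hξ _) hp hp_top
    _ ≤ |c (j + 1)| * lpNorm (y j) p μ + M := by
        rw [lpNorm_const_smul, coe_nnnorm, Real.norm_eq_abs]
        exact add_le_add_right (hM _) _

end Autoregression

theorem uniform_moment_bound_autoregression_general
    {Ω : Type*} [m0 : MeasurableSpace Ω] (μ : Measure Ω) [IsProbabilityMeasure μ]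
    (a b : ℝ) (hab : a < b) (ε : ℝ) (hε0 : 0 < ε)
    (ξ : ℕ → Ω → ℝ) (hmeas : ∀ k, Measurable (ξ k))
    (hindep : iIndepFun ξ μ)
    (hident : ∀ k, μ.map (ξ k) = μ.map (ξ 1))
    (y0 : ℝ) (t : ℕ) (ht : 1 ≤ t) :
    ∃ C : ℝ, ∀ n : ℕ, 1 ≤ n → ∀ S : ℝ → ℝ, ContDiff ℝ 1 S →
      (∀ x ∈ Set.Icc a b, |S x| ≤ 1 - ε) →
      ∀ y : ℕ → Ω → ℝ, (∀ ω, y 0 ω = y0) →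
        (∀ k, 1 ≤ k → k ≤ n →
          ∀ ω, y k ω = S (a + (k : ℝ) * (b - a) / n) * y (k - 1) ω + ξ k ω) →
        ∀ k ≤ n, ∫ ω, (y k ω) ^ (2 * t) ∂μ ≤ C := by
  set p : ℝ≥0∞ := ((2 * t : ℕ) : ℝ≥0∞)
  have hξ : ∀ k, lpNorm (ξ k) p μ = lpNorm (ξ 1) p μ := fun k ↦ by
    rw [← toReal_eLpNorm (hmeas k).aestronglyMeasurable,
      ← toReal_eLpNorm (hmeas 1).aestronglyMeasurable,
      (IdentDistrib.mk (hmeas k).aemeasurable (hmeas 1).aemeasurable (hident k)).eLpNorm_eq]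
  refine ⟨(|y0| + lpNorm (ξ 1) p μ / ε) ^ (2 * t), ?_⟩
  intro n _ S _ hS y hy0 hrec k hk
  set c : ℕ → ℝ := fun j ↦ S (a + j * (b - a) / n)
  have hstep : ∀ j < n, ∀ ω, y (j + 1) ω = c (j + 1) * y j ω + ξ (j + 1) ω :=
    fun j hj ω ↦ by simpa [c] using hrec (j + 1) (by omega) hj ω
  have hnorm := lpNorm_autoregression_le hmeas hindep (Nat.one_le_cast.mpr (by omega))
    (ENNReal.natCast_ne_top _) hε0 (fun j _ hj ↦ hS _ (add_natCast_mul_sub_div_mem_Icc hab.le hj))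
    (fun j ↦ (hξ j).le) hy0 hstep k hk
  calc ∫ ω, y k ω ^ (2 * t) ∂μ = ∫ ω, ‖y k ω‖ ^ (2 * t) ∂μ := by
        simp [Real.norm_eq_abs, (even_two_mul t).pow_abs]
    _ = lpNorm (y k) p μ ^ (2 * t) :=
        integral_norm_pow_eq_lpNorm_pow (by omega)
          (measurable_of_autoregression hmeas hy0 hstep k hk).aestronglyMeasurable
    _ ≤ (|y0| + lpNorm (ξ 1) p μ / ε) ^ (2 * t) := pow_le_pow_left₀ lpNorm_nonneg hnorm _

theorem uniform_moment_bound_autoregression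
    {Ω : Type*} [m0 : MeasurableSpace Ω] (μ : Measure Ω) [IsProbabilityMeasure μ]
    (a b : ℝ) (hab : a < b) (ε : ℝ) (hε0 : 0 < ε) (hε1 : ε < 1)
    (ς : ℝ) (hς : 1 ≤ ς)
    (ξ : ℕ → Ω → ℝ) (hmeas : ∀ k, Measurable (ξ k))
    (hindep : iIndepFun ξ μ)
    (hident : ∀ k, μ.map (ξ k) = μ.map (ξ 1))
    (hmean : ∫ ω, ξ 1 ω ∂μ = 0)
    (hvar : ∫ ω, (ξ 1 ω) ^ 2 ∂μ = 1)
    (hmom : ∀ s : ℕ, ∫ ω, |ξ 1 ω| ^ (2 * s) ∂μ ≤ ς ^ s * (Nat.doubleFactorial (2 * s - 1) : ℝ))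
    (y0 : ℝ) (t : ℕ) (ht : 1 ≤ t) :
    ∃ C : ℝ, ∀ n : ℕ, 1 ≤ n → ∀ S : ℝ → ℝ, ContDiff ℝ 1 S →
      (∀ x ∈ Set.Icc a b, |S x| ≤ 1 - ε) →
      ∀ y : ℕ → Ω → ℝ, (∀ ω, y 0 ω = y0) →
        (∀ k, 1 ≤ k → k ≤ n →
          ∀ ω, y k ω = S (a + (k : ℝ) * (b - a) / n) * y (k - 1) ω + ξ k ω) →
        ∀ k ≤ n, ∫ ω, (y k ω) ^ (2 * t) ∂μ ≤ C :=
  uniform_moment_bound_autoregression_general (m0 := m0) μ a b hab ε hε0 ξ hmeas hindep hident y0 t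
    ht
end
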